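/- Let N be a classical channel with finite input alphabet X and finite output alphabet Y, and let D be a non-signaling correlation with input alphabets R, S and output alphabets P, Q, where m := |P|. Then Succ(N, D) − 1/2 ≤ [ 1 + (1 − 1/m)·(1 − loc(D)) ]·(Succ(N) − 1/2), where loc(D) is the local fraction of D. -/

import Mathlib

open scoped Matrix Kronecker BigOperators Matrix.Norms.L2Operator ComplexOrder
open Matrix Finset

noncomputable section

/-- A classical channel: `N x y` is the probability of output `y` given input `x`. -/
def IsChannel {X Y : Type*} [Fintype Y] (N : X → Y → ℝ) : Prop :=
  (∀ x y, 0 ≤ N x y) ∧ ∀ x, ∑ y, N x y = 1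

/-- The unassisted one-shot success probability of a channel. -/
def Succ {X Y : Type*} [Fintype X] [Fintype Y] [Nonempty X]
    (N : X → Y → ℝ) : ℝ :=
  ⨆ z : X × X × (Y → Bool),
    (1 / 2) * (∑ y, if z.2.2 y = false then N z.1 y else 0) +
      (1 / 2) * (∑ y, if z.2.2 y = true then N z.2.1 y else 0)

/-- A two-part input-output correlation: `D r s p q` is the probability of
outputs `(p, q)` given inputs `(r, s)`. -/
def IsCorrelation {R S P Q : Type*} [Fintype P] [Fintype Q]
    (D : R → S → P → Q → ℝ) : Prop :=
  (∀ r s p q, 0 ≤ D r s p q) ∧ ∀ r s, ∑ p, ∑ q, D r s p q = 1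

/-- The non-signaling condition for a two-part correlation. -/
def NonSignaling {R S P Q : Type*} [Fintype P] [Fintype Q]
    (D : R → S → P → Q → ℝ) : Prop :=
  (∀ r p s s', ∑ q, D r s p q = ∑ q, D r s' p q) ∧
    ∀ s q r r', ∑ p, D r s p q = ∑ p, D r' s p q

/-- `SuccD N D` : the optimal success probability for transmitting one bit
across the channel `N` with the assistance of the correlation `D`, i.e. the
maximum over deterministic protocols `(e, f, g, h)`. -/
def SuccD {X Y R S P Q : Type*} [Fintype X] [Fintype Y] [Fintype R] [Fintype S]
    [Fintype P] [Fintype Q] [DecidableEq P] [DecidableEq Q] [DecidableEq Y]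
    [Nonempty X] [Nonempty R] [Nonempty S]
    (N : X → Y → ℝ) (D : R → S → P → Q → ℝ) : ℝ :=
  ⨆ π : (Bool → R) × (Bool → P → X) × (Y → S) × (Y → Q → Bool),
    (1 / 2) * ∑ a : Bool, ∑ p, ∑ y, ∑ q,
      D (π.1 a) (π.2.2.1 y) p q * N (π.2.1 a p) y *
        (if π.2.2.2 y q = a then 1 else 0)

/-- The non-signaling assisted one-shot success probability: the supremum of
`SuccD N D` over all non-signaling correlations `D` (over all finite alphabets). -/
def SuccNS {X Y : Type*} [Fintype X] [Fintype Y] [DecidableEq Y] [Nonempty X]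
    (N : X → Y → ℝ) : ℝ :=
  sSup { v : ℝ | ∃ (nR nS nP nQ : ℕ)
    (D : Fin (nR + 1) → Fin (nS + 1) → Fin nP → Fin nQ → ℝ),
    IsCorrelation D ∧ NonSignaling D ∧ v = SuccD N D }

/-- Local-deterministic correlations. -/
def IsLocalDet {R S P Q : Type*} [DecidableEq P] [DecidableEq Q]
    (D : R → S → P → Q → ℝ) : Prop :=
  ∃ (φ : R → P) (ψ : S → Q), ∀ r s p q,
    D r s p q = (if p = φ r then 1 else 0) * (if q = ψ s then 1 else 0)

/-- Local correlations: finite convex combinations of local-deterministic ones. -/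
def IsLocal {R S P Q : Type*} [DecidableEq P] [DecidableEq Q]
    (D : R → S → P → Q → ℝ) : Prop :=
  ∃ (n : ℕ) (w : Fin n → ℝ) (L : Fin n → R → S → P → Q → ℝ),
    (∀ i, 0 ≤ w i) ∧ (∑ i, w i = 1) ∧ (∀ i, IsLocalDet (L i)) ∧
      ∀ r s p q, D r s p q = ∑ i, w i * L i r s p q

/-- The local fraction of a correlation. -/
def locFrac {R S P Q : Type*} [Fintype P] [Fintype Q] [DecidableEq P] [DecidableEq Q]
    (D : R → S → P → Q → ℝ) : ℝ :=
  sSup { α : ℝ | 0 ≤ α ∧ α ≤ 1 ∧ ∃ L F : R → S → P → Q → ℝ,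
    IsLocal L ∧ IsCorrelation F ∧ NonSignaling F ∧
      ∀ r s p q, D r s p q = α * L r s p q + (1 - α) * F r s p q }

/-- Binary quantum correlations: all four alphabets are `Bool`, and the
correlation arises from local POVM measurements on a shared bipartite state. -/
def IsBinaryQuantum (D : Bool → Bool → Bool → Bool → ℝ) : Prop :=
  ∃ (nA nB : ℕ)
    (Λ : Matrix (Fin (nA + 1) × Fin (nB + 1)) (Fin (nA + 1) × Fin (nB + 1)) ℂ)
    (A : Bool → Bool → Matrix (Fin (nA + 1)) (Fin (nA + 1)) ℂ)
    (B : Bool → Bool → Matrix (Fin (nB + 1)) (Fin (nB + 1)) ℂ),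
    Λ.PosSemidef ∧ Λ.trace = 1 ∧
    (∀ r p, (A r p).PosSemidef) ∧ (∀ r, A r false + A r true = 1) ∧
    (∀ s q, (B s q).PosSemidef) ∧ (∀ s, B s false + B s true = 1) ∧
    ∀ r s p q, (D r s p q : ℂ) = ((A r p ⊗ₖ B s q) * Λ).trace

/-- The binary-quantum assisted one-shot success probability. -/
def SuccQb {X Y : Type*} [Fintype X] [Fintype Y] [DecidableEq Y] [Nonempty X]
    (N : X → Y → ℝ) : ℝ :=
  sSup { v : ℝ | ∃ D : Bool → Bool → Bool → Bool → ℝ,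
    IsBinaryQuantum D ∧ v = SuccD N D }

/-- The radius of a finite family of operators on `ℂ^n`, with respect to the
`ℓ²` operator norm: the minimum over Hermitian `C` of `max_i ‖H i − C‖`. -/
def matRad {n : ℕ} {I : Type*} [Fintype I] [Nonempty I]
    (H : I → Matrix (Fin n) (Fin n) ℂ) : ℝ :=
  ⨅ C : { C : Matrix (Fin n) (Fin n) ℂ // C.IsHermitian }, ⨆ i, ‖H i - C.1‖

/-- The `n`-dimensional entanglement-assisted one-shot success probability. -/
def SuccQn {X Y : Type*} [Fintype X] [Fintype Y] (n : ℕ) (N : X → Y → ℝ) : ℝ :=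
  sSup { v : ℝ | ∃ (Λ : Matrix (Fin n × Fin n) (Fin n × Fin n) ℂ)
      (A : Bool → X → Matrix (Fin n) (Fin n) ℂ)
      (B : Y → Bool → Matrix (Fin n) (Fin n) ℂ),
      Λ.PosSemidef ∧ Λ.trace = 1 ∧
      (∀ a x, (A a x).PosSemidef) ∧ (∀ a, ∑ x, A a x = 1) ∧
      (∀ y b, (B y b).PosSemidef) ∧ (∀ y, B y false + B y true = 1) ∧
      v = (1 / 2) * ∑ a : Bool, ∑ x, ∑ y,
            N x y * (((A a x ⊗ₖ B y a) * Λ).trace).re }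

/-- The channel of Prevedel et al. -/
def Mchan : Fin 4 → Fin 6 → ℝ :=
  ![![1/3, 0, 1/3, 0, 1/3, 0],
    ![1/3, 0, 0, 1/3, 0, 1/3],
    ![0, 1/3, 1/3, 0, 0, 1/3],
    ![0, 1/3, 0, 1/3, 1/3, 0]]

/-- The mod-2 inner product of the binary representations of `i` and `j`
(restricted to the first `s` bits), as a `Bool` (`true` = 1). -/
def binIP (s i j : ℕ) : Bool :=
  decide ((((Finset.range s).filter fun k => i.testBit k ∧ j.testBit k).card) % 2 = 1)

/-- The output distributions `ℓ_i` of the channel `T`: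
`ℓ_i (j, t) = (2^s − 1)⁻¹ · [b_i · b_j = t]`, where the output pair `(j, t)`
with `j ∈ {1, …, 2^s − 1}` is encoded as `(j', t) : Fin (2^s - 1) × Bool`
with `j = j' + 1`, and `t = true` encodes `1`. -/
def Tchan (s : ℕ) : Fin (2 ^ s) → Fin (2 ^ s - 1) × Bool → ℝ :=
  fun i jt =>
    if binIP s i.val (jt.1.val + 1) = jt.2 then ((2 : ℝ) ^ s - 1)⁻¹ else 0

/-!
A protocol's success probability is linear in the correlation, so a decomposition
`D = α L + (1 - α) F` splits the claim in two. Composing a protocol with a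
local-deterministic correlation gives an unassisted code, so local `L` achieve at most
`Succ N`. For non-signaling `F`, Bob's decoding defines weights `w (a, p) y` that sum to one
over `(a, p)` (Bob's marginal does not depend on Alice's input) and are bounded by Alice's
marginals `μ (a, p)` (Alice's marginal does not depend on Bob's input). Some output `p₀` has
`μ (false, p₀) ≥ 1 / m`; comparing every `N (f a p)` with `N (f false p₀)` costs at most
`(2 Succ N - 1) μ (a, p)` by the total-variation bound `∑ (N x - N x')⁺ ≤ 2 Succ N - 1`, and
the pair `(false, p₀)` costs nothing, which gives `1/2 + (2 - 1/m) (Succ N - 1/2)` for `F`.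
Optimising over the admissible `α` yields the bound with `loc D`.
-/

section Succ

def guessValue {X Y : Type*} [Fintype Y] (N : X → Y → ℝ) (x₀ x₁ : X) (g : Y → Bool) : ℝ :=
  (1 / 2) * (∑ y, if g y = false then N x₀ y else 0) +
    (1 / 2) * (∑ y, if g y = true then N x₁ y else 0)

variable {X Y : Type*} [Fintype X] [Fintype Y] [Nonempty X]

theorem guessValue_le_succ (N : X → Y → ℝ) (x₀ x₁ : X) (g : Y → Bool) :
    guessValue N x₀ x₁ g ≤ Succ N :=
  le_ciSup (f := fun z : X × X × (Y → Bool) => guessValue N z.1 z.2.1 z.2.2)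
    (Set.finite_range _).bddAbove (x₀, x₁, g)

theorem sum_posPart_sub_le_succ {N : X → Y → ℝ} (hN : IsChannel N) (x x' : X) :
    ∑ y, (N x y - N x' y)⁺ ≤ 2 * Succ N - 1 := by
  have hmax : ∀ y, (if decide (N x y ≤ N x' y) = false then N x y else 0) +
      (if decide (N x y ≤ N x' y) = true then N x' y else 0) = N x' y + (N x y - N x' y)⁺ := by
    intro y
    rw [← sup_eq_add_posPart_sub]
    by_cases hle : N x y ≤ N x' y <;> simp [hle, le_of_lt, not_le.mp]
  have h := guessValue_le_succ N x x' fun y => decide (N x y ≤ N x' y)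
  rw [guessValue, ← mul_add, ← sum_add_distrib, sum_congr rfl fun y _ => hmax y,
    sum_add_distrib, hN.2] at h
  linarith

theorem half_le_succ {N : X → Y → ℝ} (hN : IsChannel N) : 1 / 2 ≤ Succ N := by
  have h := sum_posPart_sub_le_succ hN (Classical.arbitrary X) (Classical.arbitrary X)
  simp only [sub_self, posPart_zero, sum_const_zero] at h
  linarith

end Succ

section Protocol

variable {X Y R S P Q : Type*} [Fintype X] [Fintype Y] [Fintype P] [Fintype Q]
  [DecidableEq P] [DecidableEq Q]

def protocolValue (N : X → Y → ℝ) (e : Bool → R) (f : Bool → P → X) (g : Y → S)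
    (h : Y → Q → Bool) : (R → S → P → Q → ℝ) →ₗ[ℝ] ℝ where
  toFun D := (1 / 2) * ∑ a : Bool, ∑ p, ∑ y, ∑ q,
    D (e a) (g y) p q * N (f a p) y * (if h y q = a then 1 else 0)
  map_add' D D' := by simp only [Pi.add_apply, add_mul, sum_add_distrib, mul_add]
  map_smul' c D := by
    simp only [Pi.smul_apply, smul_eq_mul, RingHom.id_apply, mul_assoc, ← mul_sum]
    ring

theorem succD_le [DecidableEq Y] [Fintype R] [Fintype S] [Nonempty X] [Nonempty R]
    [Nonempty S] {N : X → Y → ℝ} {D : R → S → P → Q → ℝ} {b : ℝ}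
    (h : ∀ e f g h, protocolValue N e f g h D ≤ b) : SuccD N D ≤ b :=
  ciSup_le fun π => h π.1 π.2.1 π.2.2.1 π.2.2.2

theorem protocolValue_le_succ_of_isLocalDet [Nonempty X] {N : X → Y → ℝ}
    {L : R → S → P → Q → ℝ} (hL : IsLocalDet L) (e : Bool → R) (f : Bool → P → X)
    (g : Y → S) (h : Y → Q → Bool) : protocolValue N e f g h L ≤ Succ N := by
  obtain ⟨φ, ψ, hL⟩ := hL
  convert guessValue_le_succ N (f false (φ (e false))) (f true (φ (e true)))
    fun y => h y (ψ (g y)) using 1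
  simp only [protocolValue, guessValue, LinearMap.coe_mk, AddHom.coe_mk, hL, ite_mul, one_mul,
    zero_mul, sum_ite_irrel, sum_const_zero, sum_ite_eq', mem_univ, if_true, Fintype.sum_bool]
  simp only [mul_ite, mul_one, mul_zero]
  ring

theorem protocolValue_le_succ_of_isLocal [Nonempty X] {N : X → Y → ℝ}
    {L : R → S → P → Q → ℝ} (hL : IsLocal L) (e : Bool → R) (f : Bool → P → X)
    (g : Y → S) (h : Y → Q → Bool) : protocolValue N e f g h L ≤ Succ N := by
  obtain ⟨n, w, Ls, hw0, hw1, hLs, hL⟩ := hL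
  have hL : L = ∑ i, w i • Ls i := by
    ext r s p q
    simp [hL, Finset.sum_apply]
  calc protocolValue N e f g h L = ∑ i, w i * protocolValue N e f g h (Ls i) := by
        simp [hL, map_sum, map_smul]
    _ ≤ ∑ i, w i * Succ N := by
        gcongr with i
        · exact hw0 i
        · exact protocolValue_le_succ_of_isLocalDet (hLs i) e f g h
    _ = Succ N := by rw [← sum_mul, hw1, one_mul]

end Protocol

theorem sum_mul_le_sum_posPart_mul {ι : Type*} (s : Finset ι) (d w : ι → ℝ) {μ : ℝ}
    (hw0 : ∀ i ∈ s, 0 ≤ w i) (hwμ : ∀ i ∈ s, w i ≤ μ) :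
    ∑ i ∈ s, d i * w i ≤ (∑ i ∈ s, (d i)⁺) * μ := by
  rw [sum_mul]
  refine sum_le_sum fun i hi => ?_
  calc d i * w i ≤ (d i)⁺ * w i := mul_le_mul_of_nonneg_right (le_posPart _) (hw0 i hi)
    _ ≤ (d i)⁺ * μ := mul_le_mul_of_nonneg_left (hwμ i hi) (posPart_nonneg _)

theorem sum_sum_channel_mul_le {X Y K : Type*} [Fintype X] [Fintype Y] [Nonempty X]
    [Fintype K] [DecidableEq K] {N : X → Y → ℝ} (hN : IsChannel N) (x : K → X)
    {w : K → Y → ℝ} {μ : K → ℝ} (hw0 : ∀ k y, 0 ≤ w k y) (hwμ : ∀ k y, w k y ≤ μ k)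
    (hμ0 : ∀ k, 0 ≤ μ k) (hw : ∀ y, ∑ k, w k y = 1) (k₀ : K) :
    ∑ k, ∑ y, N (x k) y * w k y ≤ 1 + (2 * Succ N - 1) * (∑ k, μ k - μ k₀) := by
  have hbase : ∑ k, ∑ y, N (x k₀) y * w k y = 1 := by
    rw [sum_comm]
    simp only [← mul_sum, hw, mul_one]
    exact hN.2 _
  have hexcess : ∑ k, ∑ y, (N (x k) y - N (x k₀) y) * w k y ≤
      (2 * Succ N - 1) * (∑ k, μ k - μ k₀) := by
    rw [← sum_erase univ (f := fun k => ∑ y, (N (x k) y - N (x k₀) y) * w k y)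
      (a := k₀) (by simp),
      ← sum_erase_eq_sub (mem_univ k₀), mul_sum]
    refine sum_le_sum fun k _ => ?_
    calc ∑ y, (N (x k) y - N (x k₀) y) * w k y
        ≤ (∑ y, (N (x k) y - N (x k₀) y)⁺) * μ k :=
          sum_mul_le_sum_posPart_mul _ _ _ (fun y _ => hw0 k y) fun y _ => hwμ k y
      _ ≤ (2 * Succ N - 1) * μ k :=
          mul_le_mul_of_nonneg_right (sum_posPart_sub_le_succ hN _ _) (hμ0 k)
  calc ∑ k, ∑ y, N (x k) y * w k y
      = ∑ k, ∑ y, N (x k₀) y * w k y + ∑ k, ∑ y, (N (x k) y - N (x k₀) y) * w k y := by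
        simp only [← sum_add_distrib, ← add_mul, add_sub_cancel]
    _ ≤ _ := by rw [hbase]; gcongr

section NonSignaling

variable {X Y R S P Q : Type*} [Fintype P] [Fintype Q] {F : R → S → P → Q → ℝ}
  (e : Bool → R) (g : Y → S) (h : Y → Q → Bool)

def decodeWeight (F : R → S → P → Q → ℝ) (a : Bool) (p : P) (y : Y) : ℝ :=
  ∑ q, F (e a) (g y) p q * if h y q = a then 1 else 0

theorem decodeWeight_nonneg (hF : IsCorrelation F) (a : Bool) (p : P) (y : Y) :
    0 ≤ decodeWeight e g h F a p y :=
  sum_nonneg fun q _ => mul_nonneg (hF.1 _ _ _ _) (by split_ifs <;> norm_num)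

theorem decodeWeight_le (hF : IsCorrelation F) (hFNS : NonSignaling F) (s : S) (a : Bool)
    (p : P) (y : Y) : decodeWeight e g h F a p y ≤ ∑ q, F (e a) s p q := by
  rw [← hFNS.1 (e a) p (g y) s]
  refine sum_le_sum fun q _ => ?_
  split_ifs
  · rw [mul_one]
  · rw [mul_zero]; exact hF.1 _ _ _ _

theorem sum_decodeWeight (hF : IsCorrelation F) (hFNS : NonSignaling F) (y : Y) :
    ∑ a, ∑ p, decodeWeight e g h F a p y = 1 := by
  have hbob : ∀ a q, ∑ p, F (e a) (g y) p q = ∑ p, F (e false) (g y) p q :=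
    fun a q => hFNS.2 (g y) q (e a) (e false)
  calc ∑ a, ∑ p, decodeWeight e g h F a p y
      = ∑ a, ∑ q, (∑ p, F (e a) (g y) p q) * if h y q = a then 1 else 0 := by
        simp only [decodeWeight, sum_mul]
        exact sum_congr rfl fun a _ => sum_comm
    _ = ∑ q, (∑ p, F (e false) (g y) p q) * ∑ a : Bool, if h y q = a then 1 else 0 := by
        simp only [hbob, mul_sum]
        exact sum_comm
    _ = 1 := by
        simp only [Fintype.sum_ite_eq, mul_one]
        rw [sum_comm]
        exact hF.2 _ _

variable [Fintype Y]

theorem protocolValue_eq_sum_decodeWeight [DecidableEq P] [DecidableEq Q] (N : X → Y → ℝ)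
    (f : Bool → P → X) (F : R → S → P → Q → ℝ) :
    protocolValue N e f g h F =
      1 / 2 * ∑ a, ∑ p, ∑ y, N (f a p) y * decodeWeight e g h F a p y := by
  simp only [protocolValue, decodeWeight, LinearMap.coe_mk, AddHom.coe_mk, mul_sum]
  congr! 5 with a - p - y - q
  ring

end NonSignaling

theorem protocolValue_le_of_nonSignaling {X Y R S P Q : Type*} [Fintype X] [Fintype Y]
    [Fintype P] [Fintype Q] [DecidableEq P] [DecidableEq Q] [Nonempty X] [Nonempty S]
    [Nonempty P] {N : X → Y → ℝ} (hN : IsChannel N) {F : R → S → P → Q → ℝ}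
    (hF : IsCorrelation F) (hFNS : NonSignaling F) (e : Bool → R) (f : Bool → P → X)
    (g : Y → S) (h : Y → Q → Bool) :
    protocolValue N e f g h F ≤ 1 / 2 + (2 - 1 / (Fintype.card P : ℝ)) * (Succ N - 1 / 2) := by
  let s₀ : S := Classical.arbitrary S
  let μ : Bool × P → ℝ := fun k => ∑ q, F (e k.1) s₀ k.2 q
  have hμ : ∀ a, ∑ p, μ (a, p) = 1 := fun a => hF.2 (e a) s₀
  obtain ⟨p₀, -, hp₀⟩ : ∃ p ∈ univ, 1 / (Fintype.card P : ℝ) ≤ μ (false, p) :=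
    exists_le_of_sum_le univ_nonempty (by simp [hμ])
  have hbound := sum_sum_channel_mul_le hN (fun k : Bool × P => f k.1 k.2)
    (w := fun k => decodeWeight e g h F k.1 k.2) (μ := μ)
    (fun k y => decodeWeight_nonneg e g h hF k.1 k.2 y)
    (fun k y => decodeWeight_le e g h hF hFNS s₀ k.1 k.2 y)
    (fun k => sum_nonneg fun q _ => hF.1 _ _ _ _)
    (fun y => by rw [Fintype.sum_prod_type]; exact sum_decodeWeight e g h hF hFNS y) (false, p₀)
  simp only [Fintype.sum_prod_type, hμ, Fintype.sum_bool] at hbound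
  rw [protocolValue_eq_sum_decodeWeight, Fintype.sum_bool]
  nlinarith [half_le_succ hN]

theorem succD_le_of_decomposition {X Y R S P Q : Type*} [Fintype X] [Fintype Y] [Fintype R]
    [Fintype S] [Fintype P] [Fintype Q] [DecidableEq P] [DecidableEq Q] [DecidableEq Y]
    [Nonempty X] [Nonempty R] [Nonempty S] [Nonempty P] {N : X → Y → ℝ} (hN : IsChannel N)
    {D L F : R → S → P → Q → ℝ} {α : ℝ} (hα₀ : 0 ≤ α) (hα₁ : α ≤ 1) (hL : IsLocal L)
    (hF : IsCorrelation F) (hFNS : NonSignaling F)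
    (hD : ∀ r s p q, D r s p q = α * L r s p q + (1 - α) * F r s p q) :
    SuccD N D ≤
      α * Succ N + (1 - α) * (1 / 2 + (2 - 1 / (Fintype.card P : ℝ)) * (Succ N - 1 / 2)) := by
  have hD : D = α • L + (1 - α) • F := by
    ext r s p q
    simp [hD]
  refine succD_le fun e f g h => ?_
  rw [hD, map_add, map_smul, map_smul, smul_eq_mul, smul_eq_mul]
  exact add_le_add
    (mul_le_mul_of_nonneg_left (protocolValue_le_succ_of_isLocal hL e f g h) hα₀)
    (mul_le_mul_of_nonneg_left (protocolValue_le_of_nonSignaling hN hF hFNS e f g h)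
      (sub_nonneg.2 hα₁))

theorem le_sub_mul_csSup {s : Set ℝ} (hs : s.Nonempty) {b c k : ℝ} (hk : 0 ≤ k)
    (h : ∀ α ∈ s, b ≤ c - k * α) : b ≤ c - k * sSup s := by
  have : k • sSup s ≤ c - b := by
    rw [← Real.sSup_smul_of_nonneg hk]
    refine csSup_le (hs.smul_set) ?_
    rintro _ ⟨α, hα, rfl⟩
    linarith [h α hα, smul_eq_mul k α]
  linarith [smul_eq_mul k (sSup s)]

theorem IsCorrelation.nonempty_left {R S P Q : Type*} [Fintype P] [Fintype Q] [Nonempty R]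
    [Nonempty S] {D : R → S → P → Q → ℝ} (hD : IsCorrelation D) : Nonempty P := by
  by_contra hP
  simpa [not_nonempty_iff.mp hP] using hD.2 (Classical.arbitrary R) (Classical.arbitrary S)

theorem IsCorrelation.nonempty_right {R S P Q : Type*} [Fintype P] [Fintype Q] [Nonempty R]
    [Nonempty S] {D : R → S → P → Q → ℝ} (hD : IsCorrelation D) : Nonempty Q := by
  by_contra hQ
  simpa [not_nonempty_iff.mp hQ] using hD.2 (Classical.arbitrary R) (Classical.arbitrary S)

theorem IsLocalDet.isLocal {R S P Q : Type*} [DecidableEq P] [DecidableEq Q]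
    {L : R → S → P → Q → ℝ} (hL : IsLocalDet L) : IsLocal L :=
  ⟨1, fun _ => 1, fun _ => L, fun _ => zero_le_one, by simp, fun _ => hL, by simp⟩

/-- **Theorem 7.** For any channel `N` and non-signaling correlation `D` whose
Alice-side output alphabet `P` has size `m`,
`Succ(N, D) − 1/2 ≤ (1 + (1 − 1/m)(1 − loc(D))) (Succ(N) − 1/2)`. -/
theorem succD_le_locFrac_bound {X Y R S P Q : Type*} [Fintype X] [Fintype Y]
    [Fintype R] [Fintype S] [Fintype P] [Fintype Q] [DecidableEq P]
    [DecidableEq Q] [DecidableEq Y] [Nonempty X] [Nonempty R] [Nonempty S]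
    (N : X → Y → ℝ) (hN : IsChannel N)
    (D : R → S → P → Q → ℝ) (hD : IsCorrelation D) (hNS : NonSignaling D) :
    SuccD N D - 1 / 2 ≤
      (1 + (1 - 1 / (Fintype.card P : ℝ)) * (1 - locFrac D)) *
        (Succ N - 1 / 2) := by
  have : Nonempty P := hD.nonempty_left
  obtain ⟨p₀⟩ := ‹Nonempty P›
  obtain ⟨q₀⟩ := hD.nonempty_right
  have hm : 1 / (Fintype.card P : ℝ) ≤ 1 := by
    rw [div_le_one (by positivity)]
    exact_mod_cast Fintype.card_pos
  have hS := half_le_succ hN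
  have hzero : (0 : ℝ) ∈ {α : ℝ | 0 ≤ α ∧ α ≤ 1 ∧ ∃ L F : R → S → P → Q → ℝ,
      IsLocal L ∧ IsCorrelation F ∧ NonSignaling F ∧
        ∀ r s p q, D r s p q = α * L r s p q + (1 - α) * F r s p q} :=
    ⟨le_rfl, zero_le_one, _, D,
      IsLocalDet.isLocal ⟨fun _ => p₀, fun _ => q₀, fun _ _ _ _ => rfl⟩, hD, hNS,
      fun _ _ _ _ => by ring⟩
  have hsup := le_sub_mul_csSup ⟨0, hzero⟩ (b := SuccD N D)
    (c := 1 / 2 + (2 - 1 / (Fintype.card P : ℝ)) * (Succ N - 1 / 2))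
    (mul_nonneg (sub_nonneg.2 hm) (sub_nonneg.2 hS))
    fun α ⟨hα₀, hα₁, L, F, hL, hF, hFNS, hdec⟩ => by
      linear_combination succD_le_of_decomposition hN hα₀ hα₁ hL hF hFNS hdec
  unfold locFrac
  linear_combination hsup
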